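/- arXiv:1901.03830 — 2 statements merged into one kernel-verified Lean document; each statement's English description precedes it below -/
import Mathlib

section
/- Let w:(0,∞)→(0,∞) be non-decreasing and O-regularly varying at zero and infinity with all four indices positive, and let π be a Lévy measure on ℝ^d \ {0}. Define the rescaled measures π̃_R(A) = w(R)·π(R·A) for R>0 and Borel sets A. Assume the nondegeneracy condition: there exists c0>0 such that for all R>0 and all unit vectors ξ̂, ∫_{|y|≤1} |ξ̂·y|² π̃_R(dy) ≥ c0. Then there exists c2 = c2(w,c0) > 0 such that for all ξ ∈ ℝ^d \ {0}, ∫ [1 − cos(2π ξ·y)] π(dy) ≥ c2 · w(|ξ|^{-1})^{-1}. -/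
open Filter Topology Real MeasureTheory Set
open scoped InnerProductSpace

/-! Take `R = (2‖ξ‖)⁻¹`. On the ball `‖y‖ ≤ R` the phase `2π⟪ξ, y⟫` lies in `[-π, π]`, where
`1 - cos x ≥ 2x²/π²`, so the integrand dominates `2 (⟪ξ̂, y⟫ / R)²` with `ξ̂ = ξ / ‖ξ‖`.
The nondegeneracy condition bounds the integral of the latter from below by `c0 / w R`,
and `w R ≤ w ‖ξ‖⁻¹` by monotonicity. -/

lemma eight_mul_sq_le_one_sub_cos_two_pi_mul {t : ℝ} (ht : |t| ≤ 1 / 2) :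
    8 * t ^ 2 ≤ 1 - cos (2 * π * t) := by
  have hx : |2 * π * t| ≤ π := by
    rw [abs_mul, abs_of_pos two_pi_pos]
    nlinarith [pi_pos]
  have hπ : 2 / π ^ 2 * (2 * π * t) ^ 2 = 8 * t ^ 2 := by field_simp; ring
  linarith [cos_le_one_sub_mul_cos_sq hx]

section InnerProductSpace

variable {E : Type*} [NormedAddCommGroup E] [InnerProductSpace ℝ E]

lemma one_sub_cos_inner_le (ξ y : E) :
    1 - cos ⟪ξ, y⟫_ℝ ≤ (‖ξ‖ ^ 2 + 2) * min (‖y‖ ^ 2) 1 := by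
  rcases le_total (‖y‖ ^ 2) 1 with hy | hy
  · have hinner : ⟪ξ, y⟫_ℝ ^ 2 ≤ ‖ξ‖ ^ 2 * ‖y‖ ^ 2 := by
      rw [← mul_pow, ← sq_abs]
      exact pow_le_pow_left₀ (abs_nonneg _) (abs_real_inner_le_norm ξ y) 2
    rw [min_eq_left hy]
    nlinarith [one_sub_sq_div_two_le_cos (x := ⟪ξ, y⟫_ℝ), sq_nonneg ‖y‖]
  · rw [min_eq_right hy]
    nlinarith [neg_one_le_cos ⟪ξ, y⟫_ℝ, sq_nonneg ‖ξ‖]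

variable [MeasurableSpace E] [OpensMeasurableSpace E]

lemma integrable_one_sub_cos_inner {μ : Measure E}
    (hμ : ∫⁻ y, ENNReal.ofReal (min (‖y‖ ^ 2) 1) ∂μ < ⊤) (ξ : E) :
    Integrable (fun y => 1 - cos ⟪ξ, y⟫_ℝ) μ := by
  have hmin : Integrable (fun y : E => min (‖y‖ ^ 2) 1) μ :=
    ⟨by fun_prop, (hasFiniteIntegral_iff_ofReal (.of_forall fun y => by positivity)).2 hμ⟩
  refine (hmin.const_mul (‖ξ‖ ^ 2 + 2)).mono (by fun_prop) (.of_forall fun y => ?_)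
  rw [norm_of_nonneg (sub_nonneg.2 (cos_le_one _)), norm_of_nonneg (by positivity)]
  exact one_sub_cos_inner_le ξ y

lemma two_mul_setIntegral_sq_inner_le_integral_one_sub_cos {μ : Measure E}
    (hμ : ∫⁻ y, ENNReal.ofReal (min (‖y‖ ^ 2) 1) ∂μ < ⊤) {ξ : E} (hξ : ξ ≠ 0) :
    2 * ∫ y in {y : E | ‖y‖ ≤ (2 * ‖ξ‖)⁻¹}, (⟪‖ξ‖⁻¹ • ξ, y⟫_ℝ / (2 * ‖ξ‖)⁻¹) ^ 2 ∂μ ≤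
      ∫ y, (1 - cos (2 * π * ⟪ξ, y⟫_ℝ)) ∂μ := by
  have hξ' : 0 < ‖ξ‖ := norm_pos_iff.2 hξ
  have hint : Integrable (fun y => 1 - cos (2 * π * ⟪ξ, y⟫_ℝ)) μ := by
    simpa only [real_inner_smul_left] using integrable_one_sub_cos_inner hμ ((2 * π) • ξ)
  rw [← integral_const_mul]
  refine (integral_mono_of_nonneg (.of_forall fun y => by positivity) hint.restrict ?_).trans
    (setIntegral_le_integral hint (.of_forall fun y => sub_nonneg.2 (cos_le_one _)))
  refine (ae_restrict_iff' (isClosed_le continuous_norm continuous_const).measurableSet).2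
    (.of_forall fun y (hy : ‖y‖ ≤ (2 * ‖ξ‖)⁻¹) => ?_)
  have hsmall : |⟪ξ, y⟫_ℝ| ≤ 1 / 2 := by
    calc |⟪ξ, y⟫_ℝ| ≤ ‖ξ‖ * ‖y‖ := abs_real_inner_le_norm ξ y
      _ ≤ ‖ξ‖ * (2 * ‖ξ‖)⁻¹ := by gcongr
      _ = 1 / 2 := by field_simp
  have hscale : 2 * (⟪‖ξ‖⁻¹ • ξ, y⟫_ℝ / (2 * ‖ξ‖)⁻¹) ^ 2 = 8 * ⟪ξ, y⟫_ℝ ^ 2 := by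
    rw [real_inner_smul_left]; field_simp; ring
  exact hscale.le.trans (eight_mul_sq_le_one_sub_cos_two_pi_mul hsmall)

end InnerProductSpace

theorem stmt7_general {d : ℕ}
    (μ : Measure (EuclideanSpace ℝ (Fin d)))
    (hlevy : (∫⁻ y, ENNReal.ofReal (min (‖y‖ ^ 2) 1) ∂μ) < ⊤)
    (w : ℝ → ℝ) (hwpos : ∀ r > 0, 0 < w r) (hmono : MonotoneOn w (Set.Ioi 0))
    (c0 : ℝ) (hc0 : 0 < c0)
    (hnd : ∀ R > 0, ∀ ξ : EuclideanSpace ℝ (Fin d), ‖ξ‖ = 1 →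
      c0 ≤ w R * ∫ y in {y : EuclideanSpace ℝ (Fin d) | ‖y‖ ≤ R},
        ((inner ℝ ξ y : ℝ) / R) ^ 2 ∂μ) :
    ∃ c2 > (0:ℝ), ∀ ξ : EuclideanSpace ℝ (Fin d), ξ ≠ 0 →
      c2 * (w (‖ξ‖⁻¹))⁻¹ ≤
        ∫ y, (1 - Real.cos (2 * Real.pi * (inner ℝ ξ y : ℝ))) ∂μ := by
  refine ⟨2 * c0, by positivity, fun ξ hξ => ?_⟩
  have hξ' : 0 < ‖ξ‖ := norm_pos_iff.2 hξ
  have hR : 0 < (2 * ‖ξ‖)⁻¹ := by positivity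
  have hwR := hwpos _ hR
  have hw : w (2 * ‖ξ‖)⁻¹ ≤ w ‖ξ‖⁻¹ :=
    hmono hR (inv_pos.2 hξ') (inv_anti₀ hξ' (by linarith))
  have hball := hnd _ hR (‖ξ‖⁻¹ • ξ) (norm_smul_inv_norm hξ)
  calc 2 * c0 * (w ‖ξ‖⁻¹)⁻¹ ≤ 2 * (c0 / w (2 * ‖ξ‖)⁻¹) := by
        rw [div_eq_mul_inv, ← mul_assoc]; gcongr
    _ ≤ 2 * ∫ y in {y | ‖y‖ ≤ (2 * ‖ξ‖)⁻¹}, (⟪‖ξ‖⁻¹ • ξ, y⟫_ℝ / (2 * ‖ξ‖)⁻¹) ^ 2 ∂μ := by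
        gcongr; rwa [div_le_iff₀' hwR]
    _ ≤ _ := two_mul_setIntegral_sq_inner_le_integral_one_sub_cos hlevy hξ

/-- Lower bound for the real part of a Lévy symbol under the nondegeneracy
condition **B**: if `w` is non-decreasing, O-RV at zero and infinity with all
four indices positive, and the rescaled measures `μ̃_R(A) = w(R) μ(R A)` satisfy
`∫_{|y|≤1} |ξ̂·y|² μ̃_R(dy) ≥ c0` uniformly in `R > 0` and unit `ξ̂`, then
`∫ (1 − cos(2π ξ·y)) μ(dy) ≥ c2 w(|ξ|⁻¹)⁻¹` for all `ξ ≠ 0`. -/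
theorem stmt7 {d : ℕ}
    (μ : Measure (EuclideanSpace ℝ (Fin d)))
    (hlevy : (∫⁻ y, ENNReal.ofReal (min (‖y‖ ^ 2) 1) ∂μ) < ⊤)
    (hμ0 : μ {0} = 0)
    (w : ℝ → ℝ) (hwpos : ∀ r > 0, 0 < w r) (hmono : MonotoneOn w (Set.Ioi 0))
    (r1 r2 : ℝ → ℝ)
    (hr1 : ∀ x > 0, r1 x = Filter.limsup (fun ε => w (ε * x) / w ε) (𝓝[>] (0:ℝ)))
    (hr2 : ∀ x > 0, r2 x = Filter.limsup (fun ε => w (ε * x) / w ε) Filter.atTop)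
    (hb1 : ∀ x > 0, Filter.IsBoundedUnder (· ≤ ·) (𝓝[>] (0:ℝ)) (fun ε => w (ε * x) / w ε))
    (hb2 : ∀ x > 0, Filter.IsBoundedUnder (· ≤ ·) Filter.atTop (fun ε => w (ε * x) / w ε))
    (p1 q1 p2 q2 : ℝ)
    (hp1 : Filter.Tendsto (fun ε => Real.log (r1 ε) / Real.log ε) (𝓝[>] (0:ℝ)) (𝓝 p1))
    (hq1 : Filter.Tendsto (fun ε => Real.log (r1 ε) / Real.log ε) Filter.atTop (𝓝 q1))
    (hp2 : Filter.Tendsto (fun ε => Real.log (r2 ε) / Real.log ε) (𝓝[>] (0:ℝ)) (𝓝 p2))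
    (hq2 : Filter.Tendsto (fun ε => Real.log (r2 ε) / Real.log ε) Filter.atTop (𝓝 q2))
    (hp1pos : 0 < p1) (hp2pos : 0 < p2) (hq1pos : 0 < q1) (hq2pos : 0 < q2)
    (c0 : ℝ) (hc0 : 0 < c0)
    (hnd : ∀ R > 0, ∀ ξ : EuclideanSpace ℝ (Fin d), ‖ξ‖ = 1 →
      c0 ≤ w R * ∫ y in {y : EuclideanSpace ℝ (Fin d) | ‖y‖ ≤ R},
        ((inner ℝ ξ y : ℝ) / R) ^ 2 ∂μ) :
    ∃ c2 > (0:ℝ), ∀ ξ : EuclideanSpace ℝ (Fin d), ξ ≠ 0 →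
      c2 * (w (‖ξ‖⁻¹))⁻¹ ≤
        ∫ y, (1 - Real.cos (2 * Real.pi * (inner ℝ ξ y : ℝ))) ∂μ :=
  stmt7_general μ hlevy w hwpos hmono c0 hc0 hnd
end

section
/- Let ν be a Lévy measure with continuous radial tail δ(r)=ν(|x|>r), w=1/δ O-regularly varying at zero and infinity with positive indices p1,q1,p2,q2, and ν̃_R(A)=w(R)ν(RA). Then for any α1 > max(q1,q2) and any 0 < α2 < min(p1,p2), there is C = C(w,α1,α2) > 0 such that ∫_{|y|≤1} |y|^{α1} ν̃_R(dy) + ∫_{|y|>1} |y|^{α2} ν̃_R(dy) ≤ C for all R>0. -/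
/-!
Write `δ r = ν {r < ‖x‖}` and `w = δ⁻¹`. The index bounds `q < β` and `γ < p` give
Potter-type bounds, uniformly in `0 < u ≤ v`:
`w v / v ^ β ≤ K * (w u / u ^ β)` and `u ^ γ / w u ≤ K * (v ^ γ / w v)`.
Indeed one ratio `x > 1` satisfies `w (ε * x) ≤ x ^ β * w ε` for all small and all large `ε`;
iterating along `u, u x, u x², …` handles both ends, and on the compact middle range the
monotonicity of `w` suffices. Hence `w R * δ (R * s) ≤ K * s ^ (-β)` for `s ≤ 1` and
`≤ K * s ^ (-γ)` for `s ≥ 1`, and splitting the two integrals into the dyadic shells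
`2 ^ n < ‖y‖ / R ≤ 2 ^ (n + 1)` bounds them by geometric series, convergent because
`β < α1` and `α2 < γ`.
-/

open Filter Topology Real MeasureTheory Set

def AlmostAntitoneOn {α : Type*} [Preorder α] (g : α → ℝ) (C : ℝ) (s : Set α) : Prop :=
  ∀ ⦃u⦄, u ∈ s → ∀ ⦃v⦄, v ∈ s → u ≤ v → g v ≤ C * g u

namespace AlmostAntitoneOn

section LinearOrder

variable {α : Type*} [LinearOrder α] {g : α → ℝ} {C D : ℝ} {s t : Set α}

theorem one_le (h : AlmostAntitoneOn g C s) {u : α} (hu : u ∈ s) (hg : 0 < g u) : 1 ≤ C :=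
  le_of_mul_le_mul_right (by simpa using h hu hu le_rfl) hg

theorem of_bounds {m M : ℝ} (hm : 0 < m) (hg : ∀ u ∈ s, m ≤ g u ∧ g u ≤ M) :
    AlmostAntitoneOn g (M / m) s := fun u hu v hv _ => by
  obtain ⟨hmu, -⟩ := hg u hu
  obtain ⟨hmv, hvM⟩ := hg v hv
  calc g v ≤ M / m * m := by rw [div_mul_cancel₀ _ hm.ne']; exact hvM
    _ ≤ M / m * g u := by gcongr; exact div_nonneg (hm.le.trans (hmv.trans hvM)) hm.le

theorem union {a : α} (hs : AlmostAntitoneOn g C s) (ht : AlmostAntitoneOn g D t)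
    (hsa : s ⊆ Iic a) (hta : t ⊆ Ici a) (has : a ∈ s) (hat : a ∈ t)
    (hg : ∀ u ∈ s ∪ t, 0 < g u) : AlmostAntitoneOn g (C * D) (s ∪ t) := by
  have hC := hs.one_le has (hg a (.inl has))
  have hD := ht.one_le hat (hg a (.inr hat))
  intro u hu v hv huv
  have hgu := hg u hu
  have hCu : C * g u ≤ C * D * g u := by nlinarith [mul_nonneg (sub_nonneg.2 hD) hgu.le]
  have hDu : D * g u ≤ C * D * g u := by nlinarith [mul_nonneg (sub_nonneg.2 hC) hgu.le]
  rcases hu with hu | hu <;> rcases hv with hv | hv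
  · exact (hs hu hv huv).trans hCu
  · calc g v ≤ D * g a := ht hat hv (hta hv)
      _ ≤ D * (C * g u) := by gcongr; exact hs hu has (hsa hu)
      _ = C * D * g u := by ring
  · obtain rfl : u = v := le_antisymm huv ((hsa hv).trans (hta hu))
    exact (hs hv hv le_rfl).trans hCu
  · exact (ht hu hv huv).trans hDu

end LinearOrder

theorem of_step {g : ℝ → ℝ} {C x : ℝ} {s : Set ℝ} (hs : s.OrdConnected) (hs0 : s ⊆ Ioi 0)
    (hx : 1 < x) (hC : 0 ≤ C) (hstep : ∀ ε ∈ s, ε * x ∈ s → g (ε * x) ≤ g ε)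
    (hnear : ∀ ε ∈ s, ∀ t ∈ s, ε ≤ t → t < ε * x → g t ≤ C * g ε) :
    AlmostAntitoneOn g C s := by
  intro u hu v hv huv
  have hu0 : 0 < u := hs0 hu
  obtain ⟨n, hn, hn1⟩ := exists_nat_pow_near ((one_le_div hu0).2 huv) hx
  rw [le_div_iff₀ hu0] at hn
  rw [div_lt_iff₀ hu0] at hn1
  have hmem : ∀ k ≤ n, u * x ^ k ∈ s := fun k hk =>
    hs.out hu hv ⟨le_mul_of_one_le_right hu0.le (one_le_pow₀ hx.le),
      by nlinarith [pow_le_pow_right₀ hx.le hk]⟩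
  have hchain : ∀ k ≤ n, g (u * x ^ k) ≤ g u := by
    intro k hk
    induction k with
    | zero => simp
    | succ k ih =>
      have hk' : u * x ^ k * x ∈ s := by rw [mul_assoc, ← pow_succ]; exact hmem _ hk
      calc g (u * x ^ (k + 1)) = g (u * x ^ k * x) := by rw [pow_succ, mul_assoc]
        _ ≤ g (u * x ^ k) := hstep _ (hmem k (by omega)) hk'
        _ ≤ g u := ih (by omega)
  calc g v ≤ C * g (u * x ^ n) :=
        hnear _ (hmem n le_rfl) v hv (by linarith) (by rw [mul_assoc, ← pow_succ]; linarith)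
    _ ≤ C * g u := by gcongr; exact hchain n le_rfl

theorem exists_of_eventually_step {g : ℝ → ℝ} {P : ℝ → Prop} {x C : ℝ} (hx : 1 < x)
    (hC : 0 ≤ C) (hg : ∀ t > 0, 0 < g t)
    (hbdd : ∀ a b, 0 < a → a ≤ b → ∃ m M, 0 < m ∧ ∀ t ∈ Icc a b, m ≤ g t ∧ g t ≤ M)
    (h0 : ∀ᶠ ε in 𝓝[>] 0, P ε) (hinf : ∀ᶠ ε in atTop, P ε)
    (hstep : ∀ ε > 0, P ε → P (ε * x) → g (ε * x) ≤ g ε)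
    (hnear : ∀ ε > 0, ∀ t, P ε → P t → ε ≤ t → t < ε * x → g t ≤ C * g ε) :
    ∃ K ≥ 1, AlmostAntitoneOn g K (Ioi 0) := by
  obtain ⟨ε₀, hε₀, hP₀⟩ := (nhdsGT_basis (0 : ℝ)).eventually_iff.1 h0
  obtain ⟨b₀, hPbig⟩ := eventually_atTop.1 hinf
  set a := ε₀ / 2
  set b := max b₀ a
  have ha : 0 < a := by positivity
  have hab : a ≤ b := le_max_right _ _
  have hIci : Ici a ⊆ Ioi 0 := fun t ht => ha.trans_le ht
  have hlocal : ∀ s : Set ℝ, s.OrdConnected → s ⊆ Ioi 0 → (∀ ε ∈ s, P ε) →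
      AlmostAntitoneOn g C s := fun s hs hs0 hP =>
    of_step hs hs0 hx hC (fun ε hε hεx => hstep ε (hs0 hε) (hP ε hε) (hP _ hεx))
      (fun ε hε t ht => hnear ε (hs0 hε) t (hP ε hε) (hP t ht))
  have h₀ : AlmostAntitoneOn g C (Ioc 0 a) := hlocal _ ordConnected_Ioc Ioc_subset_Ioi_self
    fun ε hε => hP₀ ⟨hε.1, hε.2.trans_lt (half_lt_self hε₀)⟩
  have hbig : AlmostAntitoneOn g C (Ici b) := hlocal _ ordConnected_Ici
    (fun t ht => hIci (hab.trans ht)) fun ε hε => hPbig ε ((le_max_left _ _).trans hε)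
  obtain ⟨m, M, hm, hmM⟩ := hbdd a b ha hab
  have hmid := (of_bounds hm hmM).union hbig (fun t ht => ht.2) subset_rfl ⟨hab, le_rfl⟩
    self_mem_Ici fun t ht => hg t (hIci (ht.elim (·.1) (hab.trans ·)))
  rw [Icc_union_Ici_eq_Ici hab] at hmid
  have hall := h₀.union hmid (fun t ht => ht.2) subset_rfl ⟨ha, le_rfl⟩ self_mem_Ici
    fun t ht => hg t (ht.elim (·.1) (hIci ·))
  rw [Ioc_union_Ici_eq_Ioi ha] at hall
  exact ⟨_, hall.one_le (mem_Ioi.2 one_pos) (hg 1 one_pos), hall⟩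

end AlmostAntitoneOn

section Potter

variable {w : ℝ → ℝ} (hw : MonotoneOn w (Ioi 0)) (hpos : ∀ t > 0, 0 < w t)
include hw hpos

theorem exists_almostAntitoneOn_div_rpow {x β : ℝ} (hx : 1 < x) (hβ : 0 ≤ β)
    (h0 : ∀ᶠ ε in 𝓝[>] 0, w (ε * x) ≤ x ^ β * w ε)
    (hinf : ∀ᶠ ε in atTop, w (ε * x) ≤ x ^ β * w ε) :
    ∃ K ≥ 1, AlmostAntitoneOn (fun t => w t / t ^ β) K (Ioi 0) := by
  have hx0 : 0 < x := by linarith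
  refine AlmostAntitoneOn.exists_of_eventually_step (C := x ^ β) hx (by positivity)
    (fun t ht => div_pos (hpos t ht) (rpow_pos_of_pos ht β)) ?_ h0 hinf ?_ ?_
  · intro a b ha hab
    have hb : 0 < b := ha.trans_le hab
    refine ⟨w a / b ^ β, w b / a ^ β, div_pos (hpos a ha) (by positivity), fun t ht => ?_⟩
    have ht0 : 0 < t := ha.trans_le ht.1
    constructor
    · gcongr
      exacts [(hpos t ht0).le, hw ha ht0 ht.1, ht.2]
    · gcongr
      exacts [(hpos b hb).le, hw ht0 hb ht.2, ht.1]
  · intro ε hε hstep _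
    rw [mul_rpow hε.le hx0.le, div_le_div_iff₀ (by positivity) (by positivity)]
    nlinarith [rpow_pos_of_pos hε β]
  · intro ε hε t hstep _ hεt htx
    have hεx : 0 < ε * x := mul_pos hε hx0
    calc w t / t ^ β ≤ w (ε * x) / ε ^ β := by
          gcongr
          exacts [(hpos _ hεx).le, hw (hε.trans_le hεt) hεx htx.le]
      _ ≤ x ^ β * w ε / ε ^ β := by gcongr
      _ = x ^ β * (w ε / ε ^ β) := mul_div_assoc _ _ _

/- A step of `w` with ratio `y` at `ε * y⁻¹` is a step of `t ^ γ / w t` with ratio `y⁻¹ > 1`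
at `ε`. -/
theorem exists_almostAntitoneOn_rpow_div {y γ : ℝ} (hy0 : 0 < y) (hy1 : y < 1) (hγ : 0 ≤ γ)
    (h0 : ∀ᶠ ε in 𝓝[>] 0, w (ε * y) ≤ y ^ γ * w ε)
    (hinf : ∀ᶠ ε in atTop, w (ε * y) ≤ y ^ γ * w ε) :
    ∃ K ≥ 1, AlmostAntitoneOn (fun t => t ^ γ / w t) K (Ioi 0) := by
  have hy : 0 < y⁻¹ := inv_pos.2 hy0
  refine AlmostAntitoneOn.exists_of_eventually_step (C := y⁻¹ ^ γ) (one_lt_inv₀ hy0 |>.2 hy1)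
    (by positivity) (fun t ht => div_pos (rpow_pos_of_pos ht γ) (hpos t ht)) ?_ h0 hinf ?_ ?_
  · intro a b ha hab
    have hb : 0 < b := ha.trans_le hab
    refine ⟨a ^ γ / w b, b ^ γ / w a, div_pos (by positivity) (hpos b hb), fun t ht => ?_⟩
    have ht0 : 0 < t := ha.trans_le ht.1
    constructor
    · gcongr
      exacts [hpos t ht0, ht.1, hw ht0 hb ht.2]
    · gcongr
      exacts [hpos a ha, ht.2, hw ha ht0 ht.1]
  · intro ε hε _ hstep
    rw [mul_assoc, inv_mul_cancel₀ hy0.ne', mul_one] at hstep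
    rw [mul_rpow hε.le hy.le, inv_rpow hy0.le,
      div_le_div_iff₀ (hpos _ (mul_pos hε hy)) (hpos _ hε)]
    have hyγ : 0 < y ^ γ := rpow_pos_of_pos hy0 γ
    calc ε ^ γ * (y ^ γ)⁻¹ * w ε ≤ ε ^ γ * (y ^ γ)⁻¹ * (y ^ γ * w (ε * y⁻¹)) := by gcongr
      _ = ε ^ γ * w (ε * y⁻¹) := by field_simp
  · intro ε hε t _ _ hεt htx
    have ht0 : 0 < t := hε.trans_le hεt
    calc t ^ γ / w t ≤ (ε * y⁻¹) ^ γ / w ε := by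
          gcongr
          exacts [hpos ε hε, hw hε ht0 hεt]
      _ = y⁻¹ ^ γ * (ε ^ γ / w ε) := by rw [mul_rpow hε.le hy.le]; ring

end Potter

section Index

theorem eventually_lt_rpow_of_tendsto_atTop {r : ℝ → ℝ} {q β : ℝ}
    (hq : Tendsto (fun x => log (r x) / log x) atTop (𝓝 q)) (hqβ : q < β) :
    ∀ᶠ x in atTop, r x < x ^ β := by
  filter_upwards [hq.eventually_lt_const hqβ, eventually_gt_atTop 1] with x hlt hx
  rcases le_or_gt (r x) 0 with hr | hr
  · exact hr.trans_lt (rpow_pos_of_pos (by linarith) β)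
  · rw [lt_rpow_iff_log_lt hr (by linarith)]
    rwa [div_lt_iff₀ (log_pos hx)] at hlt

theorem eventually_lt_rpow_of_tendsto_nhdsGT {r : ℝ → ℝ} {p γ : ℝ}
    (hp : Tendsto (fun x => log (r x) / log x) (𝓝[>] 0) (𝓝 p)) (hγp : γ < p) :
    ∀ᶠ x in 𝓝[>] 0, r x < x ^ γ := by
  filter_upwards [hp.eventually_const_lt hγp, Ioo_mem_nhdsGT one_pos] with x hlt hx
  rcases le_or_gt (r x) 0 with hr | hr
  · exact hr.trans_lt (rpow_pos_of_pos hx.1 γ)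
  · rw [lt_rpow_iff_log_lt hr hx.1]
    rwa [lt_div_iff_of_neg (log_neg hx.1 hx.2)] at hlt

theorem eventually_le_mul_of_limsup_lt {l : Filter ℝ} {w : ℝ → ℝ} {x c : ℝ}
    (hl : ∀ᶠ ε in l, 0 < ε) (hpos : ∀ t > 0, 0 < w t)
    (hb : IsBoundedUnder (· ≤ ·) l fun ε => w (ε * x) / w ε)
    (h : limsup (fun ε => w (ε * x) / w ε) l < c) : ∀ᶠ ε in l, w (ε * x) ≤ c * w ε := by
  filter_upwards [eventually_lt_of_limsup_lt h hb, hl] with ε hlt hε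
  exact ((div_lt_iff₀ (hpos ε hε)).1 hlt).le

variable {w r₀ rTop : ℝ → ℝ} (hw : MonotoneOn w (Ioi 0)) (hpos : ∀ t > 0, 0 < w t)
  (hr₀ : ∀ x > 0, r₀ x = limsup (fun ε => w (ε * x) / w ε) (𝓝[>] 0))
  (hrTop : ∀ x > 0, rTop x = limsup (fun ε => w (ε * x) / w ε) atTop)
  (hb₀ : ∀ x > 0, IsBoundedUnder (· ≤ ·) (𝓝[>] 0) fun ε => w (ε * x) / w ε)
  (hbTop : ∀ x > 0, IsBoundedUnder (· ≤ ·) atTop fun ε => w (ε * x) / w ε)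
include hw hpos hr₀ hrTop hb₀ hbTop

theorem exists_almostAntitoneOn_div_rpow_of_index_lt {q₀ qTop β : ℝ}
    (hq₀ : Tendsto (fun x => log (r₀ x) / log x) atTop (𝓝 q₀))
    (hqTop : Tendsto (fun x => log (rTop x) / log x) atTop (𝓝 qTop))
    (hβ : 0 ≤ β) (hq₀β : q₀ < β) (hqTopβ : qTop < β) :
    ∃ K ≥ 1, AlmostAntitoneOn (fun t => w t / t ^ β) K (Ioi 0) := by
  obtain ⟨x, ⟨hx₀, hxTop⟩, hx⟩ := (((eventually_lt_rpow_of_tendsto_atTop hq₀ hq₀β).and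
    (eventually_lt_rpow_of_tendsto_atTop hqTop hqTopβ)).and (eventually_gt_atTop 1)).exists
  have hx0 : 0 < x := by linarith
  exact exists_almostAntitoneOn_div_rpow hw hpos hx hβ
    (eventually_le_mul_of_limsup_lt self_mem_nhdsWithin hpos (hb₀ x hx0) (hr₀ x hx0 ▸ hx₀))
    (eventually_le_mul_of_limsup_lt (eventually_gt_atTop 0) hpos (hbTop x hx0)
      (hrTop x hx0 ▸ hxTop))

theorem exists_almostAntitoneOn_rpow_div_of_lt_index {p₀ pTop γ : ℝ}
    (hp₀ : Tendsto (fun x => log (r₀ x) / log x) (𝓝[>] 0) (𝓝 p₀))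
    (hpTop : Tendsto (fun x => log (rTop x) / log x) (𝓝[>] 0) (𝓝 pTop))
    (hγ : 0 ≤ γ) (hγp₀ : γ < p₀) (hγpTop : γ < pTop) :
    ∃ K ≥ 1, AlmostAntitoneOn (fun t => t ^ γ / w t) K (Ioi 0) := by
  obtain ⟨y, ⟨hy₀, hyTop⟩, hy⟩ := (((eventually_lt_rpow_of_tendsto_nhdsGT hp₀ hγp₀).and
    (eventually_lt_rpow_of_tendsto_nhdsGT hpTop hγpTop)).and (Ioo_mem_nhdsGT one_pos)).exists
  exact exists_almostAntitoneOn_rpow_div hw hpos hy.1 hy.2 hγ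
    (eventually_le_mul_of_limsup_lt self_mem_nhdsWithin hpos (hb₀ y hy.1) (hr₀ y hy.1 ▸ hy₀))
    (eventually_le_mul_of_limsup_lt (eventually_gt_atTop 0) hpos (hbTop y hy.1)
      (hrTop y hy.1 ▸ hyTop))

end Index

section Tail

variable {E : Type*} [NormedAddCommGroup E] [MeasurableSpace E] {ν : Measure E} {w : ℝ → ℝ}
  (hw : ∀ r, w r = (ν {x | r < ‖x‖}).toReal⁻¹) (hpos : ∀ t > 0, 0 < w t)
include hw hpos

theorem measure_norm_gt_ne_top {r : ℝ} (hr : 0 < r) : ν {x | r < ‖x‖} ≠ ⊤ :=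
  (ENNReal.toReal_pos_iff.1 (inv_pos.1 (hw r ▸ hpos r hr))).2.ne

theorem measure_norm_gt_eq_ofReal_inv {r : ℝ} (hr : 0 < r) :
    ν {x | r < ‖x‖} = ENNReal.ofReal (w r)⁻¹ := by
  rw [hw, inv_inv, ENNReal.ofReal_toReal (measure_norm_gt_ne_top hw hpos hr)]

theorem monotoneOn_of_eq_inv_measure_norm_gt : MonotoneOn w (Ioi 0) := fun a ha b hb hab => by
  rw [hw, hw]
  refine inv_anti₀ (inv_pos.1 (hw b ▸ hpos b hb)) ?_
  exact ENNReal.toReal_mono (measure_norm_gt_ne_top hw hpos ha)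
    (measure_mono fun x hx => hab.trans_lt hx)

end Tail

theorem inv_le_of_almostAntitoneOn_div_rpow {w : ℝ → ℝ} (hpos : ∀ t > 0, 0 < w t)
    {β K R s : ℝ} (h : AlmostAntitoneOn (fun t => w t / t ^ β) K (Ioi 0)) (hR : 0 < R)
    (hs : s ∈ Ioc 0 1) : (w (R * s))⁻¹ ≤ K * (w R)⁻¹ * s ^ (-β) := by
  have hRs : 0 < R * s := mul_pos hR hs.1
  have hpotter := h hRs hR (mul_le_of_le_one_right hR.le hs.2)
  have hwR := hpos R hR
  have hwRs := hpos _ hRs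
  have hRβ := rpow_pos_of_pos hR β
  have hsβ := rpow_pos_of_pos hs.1 β
  simp only [mul_rpow hR.le hs.1.le] at hpotter
  rw [rpow_neg hs.1.le]
  field_simp at hpotter ⊢
  exact hpotter

theorem inv_le_of_almostAntitoneOn_rpow_div {w : ℝ → ℝ} (hpos : ∀ t > 0, 0 < w t)
    {γ K R s : ℝ} (h : AlmostAntitoneOn (fun t => t ^ γ / w t) K (Ioi 0)) (hR : 0 < R)
    (hs : 1 ≤ s) : (w (R * s))⁻¹ ≤ K * (w R)⁻¹ * s ^ (-γ) := by
  have hs0 : 0 < s := one_pos.trans_le hs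
  have hRs : 0 < R * s := mul_pos hR hs0
  have hpotter := h hR hRs (le_mul_of_one_le_right hR.le hs)
  have hwR := hpos R hR
  have hwRs := hpos _ hRs
  have hRγ := rpow_pos_of_pos hR γ
  have hsγ := rpow_pos_of_pos hs0 γ
  simp only [mul_rpow hR.le hs0.le] at hpotter
  rw [rpow_neg hs0.le]
  field_simp at hpotter ⊢
  exact hpotter

section Moments

variable {E : Type*} [MeasurableSpace E]

theorem setLIntegral_le_of_le_geometric {ν : Measure E} {s : Set E} {A : ℕ → Set E}
    {f : E → ENNReal} {p P q Q : ℝ} (hs : s ⊆ {y | f y = 0} ∪ ⋃ n, A n)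
    (hp : 0 ≤ p) (hP : 0 ≤ P) (hq : 0 ≤ q) (hQ : 0 ≤ Q) (hPQ : P * Q < 1)
    (hf : ∀ n, ∀ y ∈ A n, f y ≤ ENNReal.ofReal (p * P ^ n))
    (hA : ∀ n, ν (A n) ≤ ENNReal.ofReal (q * Q ^ n)) :
    ∫⁻ y in s, f y ∂ν ≤ ENNReal.ofReal (p * q / (1 - P * Q)) := by
  have hshell : ∀ n, ∫⁻ y in A n, f y ∂ν ≤ ENNReal.ofReal (p * q * (P * Q) ^ n) := fun n =>
    calc ∫⁻ y in A n, f y ∂ν ≤ ∫⁻ _ in A n, ENNReal.ofReal (p * P ^ n) ∂ν :=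
          setLIntegral_mono measurable_const (hf n)
      _ = ENNReal.ofReal (p * P ^ n) * ν (A n) := setLIntegral_const _ _
      _ ≤ ENNReal.ofReal (p * P ^ n) * ENNReal.ofReal (q * Q ^ n) := by gcongr; exact hA n
      _ = ENNReal.ofReal (p * q * (P * Q) ^ n) := by
          rw [← ENNReal.ofReal_mul (by positivity)]; ring_nf
  have hzero : ∫⁻ y in {y | f y = 0}, f y ∂ν = 0 :=
    le_antisymm ((setLIntegral_mono measurable_const fun y hy => le_of_eq hy).trans_eq
      lintegral_zero) bot_le
  have hsum := (summable_geometric_of_lt_one (by positivity) hPQ).mul_left (p * q)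
  calc ∫⁻ y in s, f y ∂ν ≤ ∫⁻ y in {y | f y = 0} ∪ ⋃ n, A n, f y ∂ν := lintegral_mono_set hs
    _ ≤ ∫⁻ y in {y | f y = 0}, f y ∂ν + ∫⁻ y in ⋃ n, A n, f y ∂ν := lintegral_union_le _ _ _
    _ ≤ ∑' n, ∫⁻ y in A n, f y ∂ν := by rw [hzero, zero_add]; exact lintegral_iUnion_le _ _
    _ ≤ ∑' n, ENNReal.ofReal (p * q * (P * Q) ^ n) := ENNReal.tsum_le_tsum hshell
    _ = ENNReal.ofReal (p * q / (1 - P * Q)) := by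
        rw [← ENNReal.ofReal_tsum_of_nonneg (fun n => by positivity) hsum, tsum_mul_left,
          tsum_geometric_of_lt_one (by positivity) hPQ, div_eq_mul_inv]

theorem setIntegral_le_of_setLIntegral_le {ν : Measure E} {s : Set E} {f : E → ℝ} {C : ℝ}
    (hf : ∀ y, 0 ≤ f y) (hfm : AEStronglyMeasurable f (ν.restrict s)) (hC : 0 ≤ C)
    (h : ∫⁻ y in s, ENNReal.ofReal (f y) ∂ν ≤ ENNReal.ofReal C) : ∫ y in s, f y ∂ν ≤ C := by
  rw [integral_eq_lintegral_of_nonneg_ae (Eventually.of_forall hf) hfm]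
  exact ENNReal.toReal_le_of_le_ofReal hC h

variable [NormedAddCommGroup E] [OpensMeasurableSpace E] (ν : Measure E)

theorem exists_small_moment_le_of_tail_le {α β : ℝ} (hα : 0 < α) (hβα : β < α) :
    ∃ M > 0, ∀ R > 0, ∀ c ≥ 0,
      (∀ s ∈ Ioc (0 : ℝ) 1, ν {y | R * s < ‖y‖} ≤ ENNReal.ofReal (c * s ^ (-β))) →
      ∫ y in {y | ‖y‖ ≤ R}, (‖y‖ / R) ^ α ∂ν ≤ c * M := by
  set ρ : ℝ := 2⁻¹
  have hρ0 : 0 < ρ := by norm_num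
  have hρ1 : ρ < 1 := by norm_num
  have hPQ : ρ ^ α * ρ ^ (-β) < 1 := by
    rw [← rpow_add hρ0]; exact rpow_lt_one hρ0.le hρ1 (by linarith)
  refine ⟨ρ ^ (-β) / (1 - ρ ^ α * ρ ^ (-β)), div_pos (by positivity) (by linarith),
    fun R hR c hc htail => setIntegral_le_of_setLIntegral_le (fun y => by positivity)
      ((measurable_norm.div_const R).pow_const α).aestronglyMeasurable (by positivity) ?_⟩
  calc ∫⁻ y in {y | ‖y‖ ≤ R}, ENNReal.ofReal ((‖y‖ / R) ^ α) ∂ν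
      ≤ ENNReal.ofReal (1 * (c * ρ ^ (-β)) / (1 - ρ ^ α * ρ ^ (-β))) :=
        setLIntegral_le_of_le_geometric
          (A := fun n => {y | R * ρ ^ (n + 1) < ‖y‖ ∧ ‖y‖ ≤ R * ρ ^ n})
          ?_ zero_le_one (by positivity) (by positivity) (by positivity) hPQ ?_ ?_
    _ = ENNReal.ofReal (c * (ρ ^ (-β) / (1 - ρ ^ α * ρ ^ (-β)))) := by ring_nf
  · intro y hy
    rcases (norm_nonneg y).eq_or_lt with hy0 | hy0
    · left
      simp [← hy0, zero_rpow hα.ne']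
    · right
      obtain ⟨n, hn1, hn2⟩ :=
        exists_nat_pow_near_of_lt_one (div_pos hy0 hR) ((div_le_one hR).2 hy) hρ0 hρ1
      exact mem_iUnion.2 ⟨n, by rwa [← lt_div_iff₀' hR], by rwa [← div_le_iff₀' hR]⟩
  · intro n y hy
    rw [one_mul, rpow_pow_comm hρ0.le]
    gcongr
    rw [div_le_iff₀' hR]; exact hy.2
  · intro n
    calc ν {y | R * ρ ^ (n + 1) < ‖y‖ ∧ ‖y‖ ≤ R * ρ ^ n} ≤ ν {y | R * ρ ^ (n + 1) < ‖y‖} :=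
          measure_mono fun y hy => hy.1
      _ ≤ ENNReal.ofReal (c * (ρ ^ (n + 1)) ^ (-β)) :=
          htail _ ⟨by positivity, pow_le_one₀ hρ0.le hρ1.le⟩
      _ = ENNReal.ofReal (c * ρ ^ (-β) * (ρ ^ (-β)) ^ n) := by
          rw [← rpow_pow_comm hρ0.le, pow_succ]; ring_nf

theorem exists_large_moment_le_of_tail_le {α γ : ℝ} (hα : 0 ≤ α) (hαγ : α < γ) :
    ∃ M > 0, ∀ R > 0, ∀ c ≥ 0,
      (∀ s ≥ (1 : ℝ), ν {y | R * s < ‖y‖} ≤ ENNReal.ofReal (c * s ^ (-γ))) →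
      ∫ y in {y | R < ‖y‖}, (‖y‖ / R) ^ α ∂ν ≤ c * M := by
  have hPQ : (2 : ℝ) ^ α * 2 ^ (-γ) < 1 := by
    rw [← rpow_add two_pos]; exact rpow_lt_one_of_one_lt_of_neg one_lt_two (by linarith)
  refine ⟨2 ^ α / (1 - 2 ^ α * 2 ^ (-γ)), div_pos (by positivity) (by linarith),
    fun R hR c hc htail => setIntegral_le_of_setLIntegral_le (fun y => by positivity)
      ((measurable_norm.div_const R).pow_const α).aestronglyMeasurable (by positivity) ?_⟩
  calc ∫⁻ y in {y | R < ‖y‖}, ENNReal.ofReal ((‖y‖ / R) ^ α) ∂ν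
      ≤ ENNReal.ofReal (2 ^ α * c / (1 - 2 ^ α * 2 ^ (-γ))) :=
        setLIntegral_le_of_le_geometric
          (A := fun n => {y | R * 2 ^ n < ‖y‖ ∧ ‖y‖ ≤ R * 2 ^ (n + 1)})
          ?_ (by positivity) (by positivity) hc (by positivity) hPQ ?_ ?_
    _ = ENNReal.ofReal (c * (2 ^ α / (1 - 2 ^ α * 2 ^ (-γ)))) := by ring_nf
  · intro y hy
    right
    have hy1 : 1 < ‖y‖ / R := (one_lt_div hR).2 hy
    obtain ⟨n, hn1, hn2⟩ := exists_mem_Ioc_zpow (zero_lt_one.trans hy1) one_lt_two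
    have hn : 0 ≤ n := by
      by_contra! hn
      have : (2 : ℝ) ^ (n + 1) ≤ 1 := zpow_le_one_of_nonpos₀ one_le_two (by omega)
      linarith
    lift n to ℕ using hn
    rw [zpow_natCast] at hn1
    rw [← Nat.cast_succ, zpow_natCast] at hn2
    exact mem_iUnion.2 ⟨n, by rwa [← lt_div_iff₀' hR], by rwa [← div_le_iff₀' hR]⟩
  · intro n y hy
    rw [← pow_succ', rpow_pow_comm two_pos.le]
    gcongr
    rw [div_le_iff₀' hR]; exact hy.2
  · intro n
    calc ν {y | R * 2 ^ n < ‖y‖ ∧ ‖y‖ ≤ R * 2 ^ (n + 1)} ≤ ν {y | R * 2 ^ n < ‖y‖} :=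
          measure_mono fun y hy => hy.1
      _ ≤ ENNReal.ofReal (c * ((2 : ℝ) ^ n) ^ (-γ)) := htail _ (one_le_pow₀ one_le_two)
      _ = ENNReal.ofReal (c * (2 ^ (-γ)) ^ n) := by rw [← rpow_pow_comm two_pos.le]

end Moments

theorem stmt10_general {d : ℕ}
    (ν : Measure (EuclideanSpace ℝ (Fin d)))
    (δ w : ℝ → ℝ)
    (hδdef : ∀ r, δ r = (ν {x : EuclideanSpace ℝ (Fin d) | r < ‖x‖}).toReal)
    (hwdef : ∀ r, w r = (δ r)⁻¹)
    (hδpos : ∀ r > 0, 0 < δ r)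
    (r1 r2 : ℝ → ℝ)
    (hr1 : ∀ x > 0, r1 x = Filter.limsup (fun ε => w (ε * x) / w ε) (𝓝[>] (0:ℝ)))
    (hr2 : ∀ x > 0, r2 x = Filter.limsup (fun ε => w (ε * x) / w ε) Filter.atTop)
    (hb1 : ∀ x > 0, Filter.IsBoundedUnder (· ≤ ·) (𝓝[>] (0:ℝ)) (fun ε => w (ε * x) / w ε))
    (hb2 : ∀ x > 0, Filter.IsBoundedUnder (· ≤ ·) Filter.atTop (fun ε => w (ε * x) / w ε))
    (p1 q1 p2 q2 : ℝ)
    (hp1 : Filter.Tendsto (fun ε => Real.log (r1 ε) / Real.log ε) (𝓝[>] (0:ℝ)) (𝓝 p1))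
    (hq1 : Filter.Tendsto (fun ε => Real.log (r1 ε) / Real.log ε) Filter.atTop (𝓝 q1))
    (hp2 : Filter.Tendsto (fun ε => Real.log (r2 ε) / Real.log ε) (𝓝[>] (0:ℝ)) (𝓝 p2))
    (hq2 : Filter.Tendsto (fun ε => Real.log (r2 ε) / Real.log ε) Filter.atTop (𝓝 q2))
    (hq1pos : 0 < q1)
    (α1 α2 : ℝ) (hα1 : max q1 q2 < α1) (hα2 : 0 < α2) (hα2' : α2 < min p1 p2) :
    ∃ C > (0:ℝ), ∀ R > (0:ℝ),
      w R * (∫ y in {y : EuclideanSpace ℝ (Fin d) | ‖y‖ ≤ R}, (‖y‖ / R) ^ α1 ∂ν)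
        + w R * (∫ y in {y : EuclideanSpace ℝ (Fin d) | R < ‖y‖}, (‖y‖ / R) ^ α2 ∂ν)
        ≤ C := by
  have hw : ∀ r, w r = (ν {x | r < ‖x‖}).toReal⁻¹ := fun r => by rw [hwdef, hδdef]
  have hpos : ∀ t > 0, 0 < w t := fun t ht => hwdef t ▸ inv_pos.2 (hδpos t ht)
  have hmono := monotoneOn_of_eq_inv_measure_norm_gt hw hpos
  obtain ⟨β, hqβ, hβα⟩ := exists_between hα1
  obtain ⟨γ, hαγ, hγp⟩ := exists_between hα2'
  rw [max_lt_iff] at hqβ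
  rw [lt_min_iff] at hγp
  obtain ⟨Kβ, hKβ1, hKβ⟩ := exists_almostAntitoneOn_div_rpow_of_index_lt hmono hpos hr1 hr2
    hb1 hb2 hq1 hq2 (by linarith) hqβ.1 hqβ.2
  obtain ⟨Kγ, hKγ1, hKγ⟩ := exists_almostAntitoneOn_rpow_div_of_lt_index hmono hpos hr1 hr2
    hb1 hb2 hp1 hp2 (by linarith) hγp.1 hγp.2
  obtain ⟨M₁, hM₁, hsmall⟩ := exists_small_moment_le_of_tail_le ν (by linarith) hβα
  obtain ⟨M₂, hM₂, hlarge⟩ := exists_large_moment_le_of_tail_le ν hα2.le hαγ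
  refine ⟨Kβ * M₁ + Kγ * M₂, by positivity, fun R hR => ?_⟩
  have hwR := hpos R hR
  have h₁ := hsmall R hR (Kβ * (w R)⁻¹) (by positivity) fun s hs => by
    rw [measure_norm_gt_eq_ofReal_inv hw hpos (mul_pos hR hs.1)]
    exact ENNReal.ofReal_le_ofReal (inv_le_of_almostAntitoneOn_div_rpow hpos hKβ hR hs)
  have h₂ := hlarge R hR (Kγ * (w R)⁻¹) (by positivity) fun s hs => by
    rw [measure_norm_gt_eq_ofReal_inv hw hpos (mul_pos hR (one_pos.trans_le hs))]
    exact ENNReal.ofReal_le_ofReal (inv_le_of_almostAntitoneOn_rpow_div hpos hKγ hR hs)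
  calc _ ≤ w R * (Kβ * (w R)⁻¹ * M₁) + w R * (Kγ * (w R)⁻¹ * M₂) := by gcongr
    _ = Kβ * M₁ + Kγ * M₂ := by field_simp

/-- Uniform moment bound for the rescaled Lévy measures `ν̃_R(A) = w(R) ν(R A)`:
if `w = δ⁻¹` (with `δ` the continuous radial tail of `ν`) is O-RV at zero and
infinity with positive indices `p1,q1,p2,q2`, then for `α1 > max q1 q2` and
`0 < α2 < min p1 p2` there is `C > 0` with
`∫_{|y|≤1} |y|^{α1} ν̃_R(dy) + ∫_{|y|>1} |y|^{α2} ν̃_R(dy) ≤ C` for all `R > 0`. -/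
theorem stmt10 {d : ℕ}
    (ν : Measure (EuclideanSpace ℝ (Fin d)))
    (hlevy : (∫⁻ y, ENNReal.ofReal (min (‖y‖ ^ 2) 1) ∂ν) < ⊤)
    (hν0 : ν {0} = 0)
    (hfin : ∀ r > 0, ν {x : EuclideanSpace ℝ (Fin d) | r < ‖x‖} < ⊤)
    (δ w : ℝ → ℝ)
    (hδdef : ∀ r, δ r = (ν {x : EuclideanSpace ℝ (Fin d) | r < ‖x‖}).toReal)
    (hwdef : ∀ r, w r = (δ r)⁻¹)
    (hδcont : ContinuousOn δ (Set.Ioi 0)) (hδpos : ∀ r > 0, 0 < δ r)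
    (r1 r2 : ℝ → ℝ)
    (hr1 : ∀ x > 0, r1 x = Filter.limsup (fun ε => w (ε * x) / w ε) (𝓝[>] (0:ℝ)))
    (hr2 : ∀ x > 0, r2 x = Filter.limsup (fun ε => w (ε * x) / w ε) Filter.atTop)
    (hb1 : ∀ x > 0, Filter.IsBoundedUnder (· ≤ ·) (𝓝[>] (0:ℝ)) (fun ε => w (ε * x) / w ε))
    (hb2 : ∀ x > 0, Filter.IsBoundedUnder (· ≤ ·) Filter.atTop (fun ε => w (ε * x) / w ε))
    (p1 q1 p2 q2 : ℝ)
    (hp1 : Filter.Tendsto (fun ε => Real.log (r1 ε) / Real.log ε) (𝓝[>] (0:ℝ)) (𝓝 p1))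
    (hq1 : Filter.Tendsto (fun ε => Real.log (r1 ε) / Real.log ε) Filter.atTop (𝓝 q1))
    (hp2 : Filter.Tendsto (fun ε => Real.log (r2 ε) / Real.log ε) (𝓝[>] (0:ℝ)) (𝓝 p2))
    (hq2 : Filter.Tendsto (fun ε => Real.log (r2 ε) / Real.log ε) Filter.atTop (𝓝 q2))
    (hp1pos : 0 < p1) (hp2pos : 0 < p2) (hq1pos : 0 < q1) (hq2pos : 0 < q2)
    (α1 α2 : ℝ) (hα1 : max q1 q2 < α1) (hα2 : 0 < α2) (hα2' : α2 < min p1 p2) :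
    ∃ C > (0:ℝ), ∀ R > (0:ℝ),
      w R * (∫ y in {y : EuclideanSpace ℝ (Fin d) | ‖y‖ ≤ R}, (‖y‖ / R) ^ α1 ∂ν)
        + w R * (∫ y in {y : EuclideanSpace ℝ (Fin d) | R < ‖y‖}, (‖y‖ / R) ^ α2 ∂ν)
        ≤ C :=
  stmt10_general ν δ w hδdef hwdef hδpos r1 r2 hr1 hr2 hb1 hb2 p1 q1 p2 q2 hp1 hq1 hp2 hq2 hq1pos α1
    α2 hα1 hα2 hα2'
end
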